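/- arXiv:2203.10861 — 5 statements merged into one kernel-verified Lean document; each statement's English description precedes it below -/
import Mathlib

section
/- Let n ≥ 1 and let U be an open neighborhood of the origin in ℝⁿ (identified with Fin n → ℝ). There is no function g : ℝⁿ → ℝ that is continuously differentiable on U (e.g. ContDiffOn ℝ 1 g U) and satisfies Dg(x)(x) = n, i.e. \sum_{i=1}^n x_i ∂g/∂x_i(x) = n, for every x ∈ U with x ≠ 0. -/
open Topology Filter

/-! The Euler derivative `x ↦ Dg(x)(x)` of a `C¹` function is continuous and vanishes at the
origin, so it cannot equal the nonzero constant `n` on a punctured neighbourhood of `0`. -/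

theorem tendsto_fderiv_apply_self_nhdsNE_zero {𝕜 E F : Type*} [NontriviallyNormedField 𝕜]
    [NormedAddCommGroup E] [NormedSpace 𝕜 E] [NormedAddCommGroup F] [NormedSpace 𝕜 F]
    {g : E → F} (hg : ContinuousAt (fderiv 𝕜 g) 0) :
    Tendsto (fun x => fderiv 𝕜 g x x) (𝓝[≠] 0) (𝓝 0) := by
  simpa using (hg.clm_apply continuousAt_id).tendsto.mono_left nhdsWithin_le_nhds

theorem not_eventually_fderiv_apply_self_eq {𝕜 E F : Type*} [NontriviallyNormedField 𝕜]
    [NormedAddCommGroup E] [NormedSpace 𝕜 E] [(𝓝[≠] (0 : E)).NeBot] [NormedAddCommGroup F]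
    [NormedSpace 𝕜 F] {g : E → F} (hg : ContinuousAt (fderiv 𝕜 g) 0) {c : F} (hc : c ≠ 0) :
    ¬ ∀ᶠ x in 𝓝[≠] 0, fderiv 𝕜 g x x = c := fun h =>
  hc <| tendsto_nhds_unique (tendsto_const_nhds.congr' (h.mono fun _ hx => hx.symm))
    (tendsto_fderiv_apply_self_nhdsNE_zero hg)

/-- Let `n ≥ 1` and let `U` be an open neighborhood of the origin in `ℝⁿ`.
There is no function `g : ℝⁿ → ℝ` that is continuously differentiable on `U` and satisfies
`Dg(x)(x) = n`, i.e. `∑ᵢ xᵢ ∂g/∂xᵢ(x) = n`, for every `x ∈ U` with `x ≠ 0`. -/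
theorem stmt_1 (n : ℕ) (hn : 1 ≤ n) (U : Set (Fin n → ℝ)) (hU : IsOpen U)
    (h0 : (0 : Fin n → ℝ) ∈ U) :
    ¬ ∃ g : (Fin n → ℝ) → ℝ, ContDiffOn ℝ 1 g U ∧
      ∀ x ∈ U, x ≠ 0 → fderiv ℝ g x x = (n : ℝ) := by
  rintro ⟨g, hg, hval⟩
  have : Nonempty (Fin n) := ⟨⟨0, hn⟩⟩
  have hU0 : U ∈ 𝓝 (0 : Fin n → ℝ) := hU.mem_nhds h0
  refine not_eventually_fderiv_apply_self_eq
    ((hg.continuousOn_fderiv_of_isOpen hU le_rfl).continuousAt hU0)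
    (Nat.cast_ne_zero.mpr (Nat.one_le_iff_ne_zero.mp hn)) ?_
  filter_upwards [self_mem_nhdsWithin, nhdsWithin_le_nhds hU0] with x hx hxU
  exact hval x hxU hx
end

section
/- Let U be an open subset of ℝ³ containing a point (0, 0, z₀) of the z-axis. There is no function g : ℝ³ → ℝ that is continuously differentiable on U (e.g. ContDiffOn ℝ 1 g U) and satisfies −x·∂g/∂x(x,y,z) − y·∂g/∂y(x,y,z) = −2 for every (x,y,z) ∈ U with (x,y) ≠ (0,0). -/
/-!
A `C¹` function has a locally bounded derivative, so `Dg_p (-x, -y, 0)` tends to `0` as `p`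
approaches the `z`-axis, where the vector field vanishes. Approaching `(0, 0, z₀)` along
`t ↦ (t, 0, z₀)`, `t ≠ 0`, this quantity is identically `-2` instead.
-/

open Filter Topology

theorem ContDiffAt.tendsto_fderiv_apply_zero {𝕜 E F : Type*} [NontriviallyNormedField 𝕜]
    [NormedAddCommGroup E] [NormedSpace 𝕜 E] [NormedAddCommGroup F] [NormedSpace 𝕜 F]
    {n : WithTop ℕ∞} {g : E → F} {v : E → E} {x : E} (hg : ContDiffAt 𝕜 n g x) (hn : n ≠ 0)
    (hv : ContinuousAt v x) (hvx : v x = 0) :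
    Tendsto (fun p => fderiv 𝕜 g p (v p)) (𝓝 x) (𝓝 0) := by
  simpa [hvx] using ((hg.continuousAt_fderiv hn).clm_apply hv).tendsto

/-- Let `U` be an open subset of `ℝ³` containing a point `(0, 0, z₀)` of the `z`-axis.
There is no function `g : ℝ³ → ℝ` that is continuously differentiable on `U` and satisfies
`−x·∂g/∂x(x,y,z) − y·∂g/∂y(x,y,z) = −2` for every `(x,y,z) ∈ U` with `(x,y) ≠ (0,0)`. -/
theorem stmt_5 (U : Set (ℝ × ℝ × ℝ)) (hU : IsOpen U) (z₀ : ℝ) (hz : ((0 : ℝ), (0 : ℝ), z₀) ∈ U) :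
    ¬ ∃ g : ℝ × ℝ × ℝ → ℝ, ContDiffOn ℝ 1 g U ∧
      ∀ p ∈ U, (p.1, p.2.1) ≠ ((0 : ℝ), (0 : ℝ)) →
        fderiv ℝ g p (-p.1, -p.2.1, 0) = -2 := by
  rintro ⟨g, hg, hpde⟩
  let γ : ℝ → ℝ × ℝ × ℝ := fun t => (t, 0, z₀)
  have hγ : Tendsto γ (𝓝[≠] 0) (𝓝 (0, 0, z₀)) :=
    (Continuous.tendsto (by fun_prop) 0).mono_left nhdsWithin_le_nhds
  have hlim : Tendsto (fun t => fderiv ℝ g (γ t) (-(γ t).1, -(γ t).2.1, 0)) (𝓝[≠] 0) (𝓝 0) :=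
    ((hg.contDiffAt (hU.mem_nhds hz)).tendsto_fderiv_apply_zero (v := fun p => (-p.1, -p.2.1, 0))
      one_ne_zero (by fun_prop) (by simp)).comp hγ
  have hconst : (fun t => fderiv ℝ g (γ t) (-(γ t).1, -(γ t).2.1, 0)) =ᶠ[𝓝[≠] 0]
      fun _ => -2 := by
    filter_upwards [hγ (hU.mem_nhds hz), self_mem_nhdsWithin] with t htU ht
    exact hpde (γ t) htU (by simpa [γ] using ht)
  have h : (-2 : ℝ) = 0 := tendsto_nhds_unique (tendsto_const_nhds.congr' hconst.symm) hlim
  norm_num at h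
end

section
/- Let n ≥ 1 and let f : ℝ → ℝ be continuously differentiable with f(0) = 0 and f'(0) ≠ 0. Let U be an open subset of ℝⁿ (identified with Fin n → ℝ) containing a point p with first coordinate p_1 = 0. Then there is no function g : ℝⁿ → ℝ that is continuously differentiable on U and satisfies f(x_1)·∂g/∂x_1(x) = f'(x_1) for every x ∈ U with x_1 ≠ 0. -/
/-!
The residual `x ↦ f(x₁)·∂₁g(x) - f'(x₁)` is continuous on `U` and vanishes off the hyperplane
`{x₁ = 0}`, which has empty interior; hence it vanishes on all of `U`. At `p` it equals `-f'(0)`.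
-/

open Set Topology

section OffHyperplane

variable {ι : Type*} {X : ι → Type*} [∀ i, TopologicalSpace (X i)]

theorem dense_setOf_apply_ne (i : ι) (a : X i) [(𝓝[≠] a).NeBot] :
    Dense {x : ∀ i, X i | x i ≠ a} :=
  (dense_compl_singleton a).preimage (isOpenMap_eval i)

theorem eqOn_of_forall_apply_ne {Y : Type*} [TopologicalSpace Y] [T2Space Y]
    (i : ι) (a : X i) [(𝓝[≠] a).NeBot] {U : Set (∀ i, X i)} (hU : IsOpen U)
    {F G : (∀ i, X i) → Y} (hF : ContinuousOn F U) (hG : ContinuousOn G U)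
    (h : ∀ x ∈ U, x i ≠ a → F x = G x) : EqOn F G U :=
  EqOn.of_subset_closure (fun x hx ↦ h x hx.1 hx.2) hF hG inter_subset_left
    ((dense_setOf_apply_ne i a).open_subset_closure_inter hU)

end OffHyperplane

/-- Let `n ≥ 1` and `f : ℝ → ℝ` be `C¹` with `f(0) = 0` and `f'(0) ≠ 0`. Let `U ⊆ ℝⁿ` be open
containing a point `p` with first coordinate `0`. Then there is no function `g : ℝⁿ → ℝ`
that is `C¹` on `U` and satisfies `f(x₁)·∂g/∂x₁(x) = f'(x₁)` for every `x ∈ U` with `x₁ ≠ 0`. -/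
theorem stmt_6 (n : ℕ) (hn : 1 ≤ n) (f : ℝ → ℝ) (hf : ContDiff ℝ 1 f) (hf0 : f 0 = 0)
    (hf'0 : deriv f 0 ≠ 0) (U : Set (Fin n → ℝ)) (hU : IsOpen U) (p : Fin n → ℝ)
    (hp : p ∈ U) (hp1 : p ⟨0, hn⟩ = 0) :
    ¬ ∃ g : (Fin n → ℝ) → ℝ, ContDiffOn ℝ 1 g U ∧
      ∀ x ∈ U, x ⟨0, hn⟩ ≠ 0 →
        f (x ⟨0, hn⟩) * fderiv ℝ g x (Pi.single ⟨0, hn⟩ 1) = deriv f (x ⟨0, hn⟩) := by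
  rintro ⟨g, hg, hfg⟩
  set e : Fin n := ⟨0, hn⟩
  have hcoord : Continuous fun x : Fin n → ℝ => x e := continuous_apply e
  have hlhs : ContinuousOn (fun x => f (x e) * fderiv ℝ g x (Pi.single e 1)) U :=
    (hf.continuous.comp hcoord).continuousOn.mul
      ((hg.continuousOn_fderiv_of_isOpen hU le_rfl).clm_apply continuousOn_const)
  have hrhs : ContinuousOn (fun x => deriv f (x e)) U :=
    ((hf.continuous_deriv le_rfl).comp hcoord).continuousOn
  have hat_p := eqOn_of_forall_apply_ne e 0 hU hlhs hrhs hfg hp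
  simp only [hp1, hf0, zero_mul] at hat_p
  exact hf'0 hat_p.symm
end

section
/- There is no continuous map η : ℝ³ → ℝ³ such that η(p) ≠ 0 for every p ∈ ℝ³, and such that for every p = (x,y,z) with (x,y) ≠ (0,0) there exists a scalar c ∈ ℝ with η(p) = c·(y, −x, 0). -/
open Topology

theorem Continuous.apply_eq_of_forall_ne {X Y : Type*} [TopologicalSpace X] [TopologicalSpace Y]
    [T2Space Y] {f : X → Y} (hf : Continuous f) {x : X} [(𝓝[≠] x).NeBot] {c : Y}
    (h : ∀ y, y ≠ x → f y = c) : f x = c :=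
  congrFun (hf.ext_on (dense_compl_singleton x) continuous_const h) x

/-- There is no continuous map `η : ℝ³ → ℝ³` such that `η(p) ≠ 0` for every `p`, and such that
for every `p = (x,y,z)` with `(x,y) ≠ (0,0)` there exists a scalar `c ∈ ℝ`
with `η(p) = c·(y, −x, 0)`. -/
theorem stmt_8 :
    ¬ ∃ η : ℝ × ℝ × ℝ → ℝ × ℝ × ℝ, Continuous η ∧ (∀ p, η p ≠ 0) ∧
      ∀ p : ℝ × ℝ × ℝ, (p.1, p.2.1) ≠ ((0 : ℝ), (0 : ℝ)) →
        ∃ c : ℝ, η p = c • ((p.2.1, -p.1, 0) : ℝ × ℝ × ℝ) := by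
  rintro ⟨η, hη, hne, hpar⟩
  -- Each coordinate of `η 0` is a limit along an axis on which that coordinate of `η` vanishes.
  let f : ℝ → ℝ × ℝ × ℝ := fun t => ((η (t, 0, 0)).1, (η (0, t, 0)).2.1, (η (t, 0, 0)).2.2)
  have hf : Continuous f := by fun_prop
  have hf_punctured : ∀ t, t ≠ 0 → f t = 0 := by
    intro t ht
    obtain ⟨a, ha⟩ := hpar (t, 0, 0) (by simpa using ht)
    obtain ⟨b, hb⟩ := hpar (0, t, 0) (by simpa using ht)
    simp [f, ha, hb]
  exact hne 0 (hf.apply_eq_of_forall_ne hf_punctured)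
end

section
/- Let n ≥ 1 and let x ∈ ℝⁿ (identified with Fin n → ℝ) with x ≠ 0. Then the kernel of the linear map M_n(ℝ) → ℝⁿ sending a matrix A to the vector whose j-th component is \sum_{i=1}^n A_{ij}·x_i equals the linear span of the matrices x_i·E_{jk} − x_j·E_{ik} for 1 ≤ i, j, k ≤ n, where E_{jk} denotes the standard basis matrix with a 1 in position (j,k) and 0 elsewhere. -/
/-- The linear map `Mₙ(ℝ) → ℝⁿ` sending a matrix `A` to the vector whose `j`-th component is
`∑ᵢ Aᵢⱼ·xᵢ` (the pointwise anchor of the action Lie algebroid `ℝⁿ ⋊ glₙ(ℝ)` at `x`). -/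
noncomputable def glAnchor (n : ℕ) (x : Fin n → ℝ) :
    Matrix (Fin n) (Fin n) ℝ →ₗ[ℝ] (Fin n → ℝ) where
  toFun A := fun j => ∑ i, A i j * x i
  map_add' A B := by
    funext j
    simp [Matrix.add_apply, add_mul, Finset.sum_add_distrib]
  map_smul' c A := by
    funext j
    simp [Matrix.smul_apply, Finset.mul_sum, mul_assoc]

/-!
Write `Eⱼₖ` for the matrix units. Expanding `A = ∑ Aᵢₖ Eᵢₖ` and fixing an index `i₀`, one has

  `x i₀ • A = ∑ᵢₖ Aᵢₖ (x i₀ Eᵢₖ − xᵢ Eᵢ₀ₖ) + ∑ₖ (x ᵥ* A)ₖ Eᵢ₀ₖ`,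

so if `x ᵥ* A = 0` then `x i₀ • A` is a combination of Koszul relations; choosing `x i₀ ≠ 0` and
dividing by it puts `A` in their span. Conversely each Koszul relation is killed by `x ᵥ* ·`.
-/

open Matrix

variable {ι R K : Type*} [Fintype ι] [DecidableEq ι]

theorem Matrix.vecMul_single_one [CommRing R] (x : ι → R) (j k : ι) :
    x ᵥ* single j k (1 : R) = Pi.single k (x j) := by
  ext q
  simp [vecMul, dotProduct, single_apply, Pi.single_apply, ite_and, eq_comm]

def koszulRelations [CommRing R] (x : ι → R) : Set (Matrix ι ι R) :=
  {M | ∃ i j k : ι, M = x i • single j k 1 - x j • single i k 1}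

section CommRing

variable [CommRing R] (x : ι → R)

theorem vecMul_eq_zero_of_mem_koszulRelations {M : Matrix ι ι R} (hM : M ∈ koszulRelations x) :
    x ᵥ* M = 0 := by
  obtain ⟨i, j, k, rfl⟩ := hM
  rw [vecMul_sub, vecMul_smul, vecMul_smul, vecMul_single_one, vecMul_single_one,
    ← Pi.single_smul', ← Pi.single_smul', smul_eq_mul, smul_eq_mul, mul_comm, sub_self]

theorem span_koszulRelations_le_ker :
    Submodule.span R (koszulRelations x) ≤ LinearMap.ker (vecMulBilin R R x) :=
  Submodule.span_le.mpr fun _ hM => vecMul_eq_zero_of_mem_koszulRelations x hM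

theorem smul_eq_sum_koszul_add_sum_vecMul (A : Matrix ι ι R) (i₀ : ι) :
    x i₀ • A = ∑ i, ∑ k, A i k • (x i₀ • single i k 1 - x i • single i₀ k 1)
      + ∑ k, (x ᵥ* A) k • single i₀ k 1 := by
  ext p q
  simp [Matrix.sum_apply, single_apply, vecMul, dotProduct, mul_sub, Finset.sum_sub_distrib,
    ite_and, mul_comm]

theorem smul_mem_span_koszulRelations_of_vecMul_eq_zero {A : Matrix ι ι R} (hA : x ᵥ* A = 0)
    (i₀ : ι) : x i₀ • A ∈ Submodule.span R (koszulRelations x) := by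
  rw [smul_eq_sum_koszul_add_sum_vecMul x A i₀, hA]
  simp only [Pi.zero_apply, zero_smul, Finset.sum_const_zero, add_zero]
  exact Submodule.sum_mem _ fun i _ => Submodule.sum_mem _ fun k _ =>
    Submodule.smul_mem _ _ (Submodule.subset_span ⟨i₀, i, k, rfl⟩)

end CommRing

theorem ker_vecMulBilin_eq_span_koszulRelations [Field K] {x : ι → K} (hx : x ≠ 0) :
    LinearMap.ker (vecMulBilin K K x) = Submodule.span K (koszulRelations x) := by
  refine le_antisymm (fun A hA => ?_) (span_koszulRelations_le_ker x)
  obtain ⟨i₀, hi₀⟩ := Function.ne_iff.mp hx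
  have h := smul_mem_span_koszulRelations_of_vecMul_eq_zero x (LinearMap.mem_ker.mp hA) i₀
  exact (Submodule.smul_mem_iff _ hi₀).mp h

theorem glAnchor_eq_vecMulBilin (n : ℕ) (x : Fin n → ℝ) : glAnchor n x = vecMulBilin ℝ ℝ x := by
  ext A j
  simp [glAnchor, vecMul, dotProduct, mul_comm]

theorem stmt_17_general (n : ℕ) (x : Fin n → ℝ) (hx : x ≠ 0) :
    LinearMap.ker (glAnchor n x) =
      Submodule.span ℝ {M : Matrix (Fin n) (Fin n) ℝ | ∃ i j k : Fin n,
        M = x i • Matrix.single j k 1 - x j • Matrix.single i k 1} := by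
  rw [glAnchor_eq_vecMulBilin]
  exact ker_vecMulBilin_eq_span_koszulRelations hx

/-- Let `n ≥ 1` and `x ∈ ℝⁿ` with `x ≠ 0`. Then the kernel of the linear map `Mₙ(ℝ) → ℝⁿ`,
`A ↦ (∑ᵢ Aᵢⱼ·xᵢ)ⱼ`, equals the linear span of the matrices `xᵢ·Eⱼₖ − xⱼ·Eᵢₖ` for
`1 ≤ i, j, k ≤ n`, where `Eⱼₖ` is the standard basis matrix. -/
theorem stmt_17 (n : ℕ) (hn : 1 ≤ n) (x : Fin n → ℝ) (hx : x ≠ 0) :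
    LinearMap.ker (glAnchor n x) =
      Submodule.span ℝ {M : Matrix (Fin n) (Fin n) ℝ | ∃ i j k : Fin n,
        M = x i • Matrix.single j k 1 - x j • Matrix.single i k 1} :=
  stmt_17_general n x hx
end
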